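/- For every K > 0 there exists a positive constant C₁, depending only on K, with the following property: for every 1-periodic C² function F : ℝ³ → ℝ with ‖F‖_{C²} ≤ K and ∫_{[0,1]³} e^F dV = 1, and every u ∈ C̃⁴(T³) solving the reduced Calabi–Yau equation (u_xx + 1)(u_yy + u_tt + u_t + 1) − u_xy² − u_xt² = e^F, one has |Δu|_{C⁰} ≤ C₁ (1 + |u|_{C¹}), where Δu = u_xx + u_yy + u_tt. -/

import Mathlib

/-!
Write `A = u_xx + 1` and `B = u_yy + u_tt + u_t + 1`, so that the equation reads
`A B - u_xy² - u_xt² = e^F` and `A + B - 2 = Δu + u_t`. At a minimum point of `u` we have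
`A ≥ 1`, and `A` never vanishes, so `A, B > 0` everywhere and the equation is elliptic.
Differentiating it twice along each axis and summing shows that its linearization `L` maps
`Δu + u_t` to the second derivatives of `e^F` minus quadratic terms in the third derivatives of
`u`, each of which is at most `((Δ + ∂_t) u_e)² / 2`. Let `M` bound the first derivatives of
`u`. At a maximum point of `H = Δu + u_t - u / (1 + M)` we have `L H ≤ 0` and `∇H = 0`, so
`(Δ + ∂_t) u_e = u_e / (1 + M)` there, and this bounds `A + B` at that point by `C(K) (1 + M)`. Since the oscillation of the
periodic function `u` is at most `3 M`, the bound on `H` at its maximum bounds `Δu + u_t`,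
hence `Δu`, everywhere.
-/

open MeasureTheory

noncomputable section

/-- Points of `ℝ³`, written as `ℝ × ℝ × ℝ`. -/
abbrev R3 := ℝ × ℝ × ℝ

/-- The coordinate direction `x`. -/
def vx : R3 := (1, 0, 0)
/-- The coordinate direction `y`. -/
def vy : R3 := (0, 1, 0)
/-- The coordinate direction `t`. -/
def vt : R3 := (0, 0, 1)

/-- Partial (directional) derivative in the direction `e`. -/
def pd (e : R3) (u : R3 → ℝ) : R3 → ℝ := fun p => fderiv ℝ u p e

/-- `1`-periodicity in each of the three variables. -/
def Periodic3 (u : R3 → ℝ) : Prop :=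
  ∀ p : R3, u (p + vx) = u p ∧ u (p + vy) = u p ∧ u (p + vt) = u p

/-- The unit cube `[0,1]³`. -/
def cube : Set R3 := Set.Icc (0, 0, 0) (1, 1, 1)

/-- Zero mean over the unit cube. -/
def ZeroMean (u : R3 → ℝ) : Prop := ∫ p in cube, u p = 0

/-- The reduced Calabi–Yau equation
`(u_xx + 1)(u_yy + u_tt + u_t + 1) − u_xy² − u_xt² = e^F` on `ℝ³`. -/
def CYeq (F u : R3 → ℝ) : Prop :=
  ∀ p : R3,
    (pd vx (pd vx u) p + 1)
        * (pd vy (pd vy u) p + pd vt (pd vt u) p + pd vt u p + 1)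
      - (pd vy (pd vx u) p) ^ 2 - (pd vt (pd vx u) p) ^ 2 = Real.exp (F p)

/-- The Euclidean norm on `ℝ³ = ℝ × ℝ × ℝ`. -/
def enorm3 (h : R3) : ℝ := Real.sqrt (h.1 ^ 2 + h.2.1 ^ 2 + h.2.2 ^ 2)

/-- `‖F‖_{C²} ≤ K`: all partial derivatives of `F` of order `≤ 2` are bounded by `K`. -/
def C2Bound (F : R3 → ℝ) (K : ℝ) : Prop :=
  ∀ p : R3, |F p| ≤ K ∧
    (∀ e ∈ ({vx, vy, vt} : Set R3), |pd e F p| ≤ K) ∧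
    (∀ e ∈ ({vx, vy, vt} : Set R3), ∀ e' ∈ ({vx, vy, vt} : Set R3),
      |pd e (pd e' F) p| ≤ K)

section PartialDerivatives

variable {f g : R3 → ℝ} {p : R3}

lemma contDiff_pd {n m : WithTop ℕ∞} (hf : ContDiff ℝ n f) (h : m + 1 ≤ n) (e : R3) :
    ContDiff ℝ m (pd e f) :=
  (hf.fderiv_right h).clm_apply contDiff_const

lemma differentiable_pd {n : WithTop ℕ∞} (hf : ContDiff ℝ n f) (hn : 2 ≤ n) (e : R3) :
    Differentiable ℝ (pd e f) :=
  (contDiff_pd (m := 1) hf hn e).differentiable one_ne_zero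

lemma pd_fun_add (hf : DifferentiableAt ℝ f p) (hg : DifferentiableAt ℝ g p) (e : R3) :
    pd e (fun q => f q + g q) p = pd e f p + pd e g p := by
  simp [pd, fderiv_fun_add hf hg]

lemma pd_fun_sub (hf : DifferentiableAt ℝ f p) (hg : DifferentiableAt ℝ g p) (e : R3) :
    pd e (fun q => f q - g q) p = pd e f p - pd e g p := by
  simp [pd, fderiv_fun_sub hf hg]

lemma pd_fun_mul (hf : DifferentiableAt ℝ f p) (hg : DifferentiableAt ℝ g p) (e : R3) :
    pd e (fun q => f q * g q) p = pd e f p * g p + f p * pd e g p := by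
  simp [pd, fderiv_fun_mul hf hg]
  ring

lemma pd_const_mul (hf : DifferentiableAt ℝ f p) (c : ℝ) (e : R3) :
    pd e (fun q => c * f q) p = c * pd e f p := by
  simp [pd, fderiv_const_mul hf]

lemma pd_const (c : ℝ) (e : R3) : pd e (fun _ => c) p = 0 := by
  simp [pd]

lemma pd_add_const (c : ℝ) (e : R3) : pd e (fun q => f q + c) p = pd e f p := by
  simp [pd]

lemma pd_fun_sq (hf : DifferentiableAt ℝ f p) (e : R3) :
    pd e (fun q => f q ^ 2) p = 2 * f p * pd e f p := by
  simp only [sq, pd_fun_mul hf hf]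
  ring

lemma pd_neg (e : R3) : pd e (-f) = -pd e f := by
  ext p
  simp [pd, fderiv_neg]

lemma pd_add (hf : Differentiable ℝ f) (hg : Differentiable ℝ g) (e : R3) :
    pd e (f + g) = pd e f + pd e g :=
  funext fun p => pd_fun_add (hf p) (hg p) e

lemma pd_sub (hf : Differentiable ℝ f) (hg : Differentiable ℝ g) (e : R3) :
    pd e (f - g) = pd e f - pd e g :=
  funext fun p => pd_fun_sub (hf p) (hg p) e

lemma pd_const_smul (hf : Differentiable ℝ f) (c : ℝ) (e : R3) : pd e (c • f) = c • pd e f :=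
  funext fun p => pd_const_mul (hf p) c e

lemma pd_exp (hf : DifferentiableAt ℝ f p) (e : R3) :
    pd e (fun q => Real.exp (f q)) p = Real.exp (f p) * pd e f p := by
  simp [pd, fderiv_exp hf]

lemma pd_pd_exp (hf : ContDiff ℝ 2 f) (e p : R3) :
    pd e (pd e (fun q => Real.exp (f q))) p
      = Real.exp (f p) * (pd e f p ^ 2 + pd e (pd e f) p) := by
  have hf1 : Differentiable ℝ f := hf.differentiable (by norm_num)
  have hf2 : Differentiable ℝ (pd e f) := differentiable_pd hf le_rfl e
  have : pd e (fun q => Real.exp (f q)) = fun q => Real.exp (f q) * pd e f q :=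
    funext fun q => pd_exp (hf1 q) e
  rw [this, pd_fun_mul (by fun_prop) (hf2 p), pd_exp (hf1 p)]
  ring

lemma pd_pd_eq_fderiv_fderiv (hf : ContDiff ℝ 2 f) (v w p : R3) :
    pd v (pd w f) p = fderiv ℝ (fderiv ℝ f) p v w := by
  have hdf : DifferentiableAt ℝ (fderiv ℝ f) p :=
    (hf.fderiv_right (m := 1) (by norm_num)).differentiable one_ne_zero p
  change fderiv ℝ (fun q => fderiv ℝ f q w) p v = _
  simp [fderiv_clm_apply hdf (differentiableAt_const w)]

lemma pd_comm (hf : ContDiff ℝ 2 f) (v w : R3) : pd v (pd w f) = pd w (pd v f) := by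
  ext p
  rw [pd_pd_eq_fderiv_fderiv hf, pd_pd_eq_fderiv_fderiv hf]
  exact hf.contDiffAt.isSymmSndFDerivAt (by simp) v w

lemma pd_pd_pd_comm (hf : ContDiff ℝ 3 f) (e a b : R3) :
    pd e (pd a (pd b f)) = pd a (pd b (pd e f)) := by
  rw [pd_comm (contDiff_pd hf (by norm_num) b) e a, pd_comm (hf.of_le (by norm_num)) e b]

open Filter Topology in
lemma IsLocalMax.deriv_deriv_nonpos {φ : ℝ → ℝ} {a : ℝ} (h : IsLocalMax φ a)
    (hc : ContinuousAt φ a) : deriv (deriv φ) a ≤ 0 := by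
  by_contra! hpos
  have hmin := isLocalMin_of_deriv_deriv_pos hpos h.deriv_eq_zero hc
  have hconst : φ =ᶠ[𝓝 a] fun _ => φ a := (h.and hmin).mono fun x hx => le_antisymm hx.1 hx.2
  rw [hconst.deriv.deriv_eq] at hpos
  simp at hpos

lemma IsLocalMax.pd_eq_zero (h : IsLocalMax f p) (e : R3) : pd e f p = 0 := by
  simp [pd, h.fderiv_eq_zero]

lemma IsLocalMax.pd_pd_nonpos (h : IsLocalMax f p) (hf : ContDiff ℝ 2 f) (e : R3) :
    pd e (pd e f) p ≤ 0 := by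
  have hline : ∀ s : ℝ, HasDerivAt (fun s : ℝ => p + s • e) e s := fun s => by
    simpa using ((hasDerivAt_id s).smul_const e).const_add p
  have hderiv : ∀ g : R3 → ℝ, Differentiable ℝ g →
      deriv (fun s : ℝ => g (p + s • e)) = fun s => pd e g (p + s • e) :=
    fun g hg => funext fun s => ((hg _).hasFDerivAt.comp_hasDerivAt s (hline s)).deriv
  have hmax : IsLocalMax (fun s : ℝ => f (p + s • e)) 0 :=
    IsLocalMax.comp_continuous (g := fun s : ℝ => p + s • e) (by simpa using h)
      (hline 0).continuousAt
  have := hmax.deriv_deriv_nonpos (hf.continuous.comp (by fun_prop)).continuousAt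
  rw [hderiv f (hf.differentiable two_ne_zero),
    hderiv _ (differentiable_pd hf le_rfl e)] at this
  simpa using this

lemma IsLocalMin.pd_pd_nonneg (h : IsLocalMin f p) (hf : ContDiff ℝ 2 f) (e : R3) :
    0 ≤ pd e (pd e f) p := by
  have := h.neg.pd_pd_nonpos hf.neg e
  rwa [show (fun x => -f x) = -f from rfl, pd_neg, pd_neg, Pi.neg_apply, neg_nonpos] at this

lemma exists_mem_cube_forall_periodic3_eq (p : R3) :
    ∃ q ∈ cube, ∀ g : R3 → ℝ, Periodic3 g → g q = g p := by
  refine ⟨p - ⌊p.1⌋ • vx - ⌊p.2.1⌋ • vy - ⌊p.2.2⌋ • vt, ?_, fun g hg => ?_⟩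
  · have hq : p - ⌊p.1⌋ • vx - ⌊p.2.1⌋ • vy - ⌊p.2.2⌋ • vt
        = (Int.fract p.1, Int.fract p.2.1, Int.fract p.2.2) := by
      ext <;> simp [vx, vy, vt, Int.self_sub_floor]
    rw [hq]
    simp [cube, Prod.le_def, Int.fract_nonneg, (Int.fract_lt_one _).le]
  · rw [Function.Periodic.sub_zsmul_eq (c := vt) fun x => (hg x).2.2,
      Function.Periodic.sub_zsmul_eq (c := vy) fun x => (hg x).2.1,
      Function.Periodic.sub_zsmul_eq (c := vx) fun x => (hg x).1]

lemma cube_nonempty : cube.Nonempty := ⟨0, by simp [cube, Prod.le_def]⟩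

lemma Periodic3.exists_forall_le (hg : Periodic3 g) (hc : Continuous g) :
    ∃ p₀, ∀ p, g p ≤ g p₀ := by
  obtain ⟨p₀, -, hmax⟩ := (isCompact_Icc : IsCompact cube).exists_isMaxOn cube_nonempty
    hc.continuousOn
  refine ⟨p₀, fun p => ?_⟩
  obtain ⟨q, hq, hqp⟩ := exists_mem_cube_forall_periodic3_eq p
  exact hqp g hg ▸ hmax hq

lemma Periodic3.exists_forall_ge (hg : Periodic3 g) (hc : Continuous g) :
    ∃ p₀, ∀ p, g p₀ ≤ g p := by
  obtain ⟨p₀, -, hmin⟩ := (isCompact_Icc : IsCompact cube).exists_isMinOn cube_nonempty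
    hc.continuousOn
  refine ⟨p₀, fun p => ?_⟩
  obtain ⟨q, hq, hqp⟩ := exists_mem_cube_forall_periodic3_eq p
  exact hqp g hg ▸ hmin hq

lemma Periodic3.add (hf : Periodic3 f) (hg : Periodic3 g) : Periodic3 (f + g) := fun p => by
  simp [(hf p).1, (hf p).2.1, (hf p).2.2, (hg p).1, (hg p).2.1, (hg p).2.2]

lemma Periodic3.sub (hf : Periodic3 f) (hg : Periodic3 g) : Periodic3 (f - g) := fun p => by
  simp [(hf p).1, (hf p).2.1, (hf p).2.2, (hg p).1, (hg p).2.1, (hg p).2.2]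

lemma Periodic3.const_smul (hf : Periodic3 f) (c : ℝ) : Periodic3 (c • f) := fun p => by
  simp [(hf p).1, (hf p).2.1, (hf p).2.2]

lemma periodic3_pd (hf : Periodic3 f) (e : R3) : Periodic3 (pd e f) := by
  have key (v : R3) (hv : ∀ q, f (q + v) = f q) (q : R3) : pd e f (q + v) = pd e f q := by
    change fderiv ℝ f (q + v) e = fderiv ℝ f q e
    rw [← fderiv_comp_add_right, show (fun x => f (x + v)) = f from funext hv]
  exact fun q => ⟨key vx (fun q => (hf q).1) q, key vy (fun q => (hf q).2.1) q,
    key vt (fun q => (hf q).2.2) q⟩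

lemma dist_le_one_of_mem_cube {p q : R3} (hp : p ∈ cube) (hq : q ∈ cube) : dist p q ≤ 1 := by
  simp only [cube, Set.Icc_prod_eq, Set.mem_prod] at hp hq
  simp only [Prod.dist_eq, max_le_iff]
  exact ⟨Real.dist_le_of_mem_Icc_01 hp.1 hq.1, Real.dist_le_of_mem_Icc_01 hp.2.1 hq.2.1,
    Real.dist_le_of_mem_Icc_01 hp.2.2 hq.2.2⟩

lemma norm_fderiv_le_of_abs_pd_le {M : ℝ}
    (hM : ∀ e ∈ ({vx, vy, vt} : Set R3), |pd e f p| ≤ M) : ‖fderiv ℝ f p‖ ≤ 3 * M := by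
  have hx := hM vx (by simp)
  have hy := hM vy (by simp)
  have ht := hM vt (by simp)
  refine ContinuousLinearMap.opNorm_le_bound _ (by linarith [abs_nonneg (pd vx f p)]) fun w => ?_
  have hw : fderiv ℝ f p w = w.1 * pd vx f p + w.2.1 * pd vy f p + w.2.2 * pd vt f p := by
    conv_lhs => rw [show w = w.1 • vx + w.2.1 • vy + w.2.2 • vt by ext <;> simp [vx, vy, vt]]
    simp [pd]
  have h1 : |w.1| ≤ ‖w‖ := norm_fst_le w
  have h2 : |w.2.1| ≤ ‖w‖ := (norm_fst_le w.2).trans (norm_snd_le w)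
  have h3 : |w.2.2| ≤ ‖w‖ := (norm_snd_le w.2).trans (norm_snd_le w)
  rw [hw, Real.norm_eq_abs]
  calc _ ≤ |w.1| * |pd vx f p| + |w.2.1| * |pd vy f p| + |w.2.2| * |pd vt f p| := by
        simpa only [abs_mul] using
          abs_add_three (w.1 * pd vx f p) (w.2.1 * pd vy f p) (w.2.2 * pd vt f p)
    _ ≤ ‖w‖ * M + ‖w‖ * M + ‖w‖ * M := by gcongr
    _ = 3 * M * ‖w‖ := by ring

lemma Periodic3.abs_sub_le (hper : Periodic3 f) (hf : Differentiable ℝ f) {M : ℝ}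
    (hM : ∀ e ∈ ({vx, vy, vt} : Set R3), ∀ p, |pd e f p| ≤ M) (p q : R3) :
    |f p - f q| ≤ 3 * M := by
  obtain ⟨p', hp', hpp'⟩ := exists_mem_cube_forall_periodic3_eq p
  obtain ⟨q', hq', hqq'⟩ := exists_mem_cube_forall_periodic3_eq q
  have hmvt := convex_univ.norm_image_sub_le_of_norm_fderiv_le (fun x _ => hf x)
    (fun x _ => norm_fderiv_le_of_abs_pd_le fun e he => hM e he x) (Set.mem_univ q')
    (Set.mem_univ p')
  rw [← hpp' f hper, ← hqq' f hper, ← Real.norm_eq_abs]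
  calc _ ≤ 3 * M * ‖p' - q'‖ := hmvt
    _ ≤ 3 * M * 1 := by
        gcongr
        · linarith [abs_nonneg (pd vx f p), hM vx (by simp) p]
        · exact (dist_eq_norm p' q').symm ▸ dist_le_one_of_mem_cube hp' hq'
    _ = 3 * M := mul_one _

end PartialDerivatives

/-- `v_yy + v_tt + v_t`, so that `CYeq F u` reads
`(u_xx + 1)(ytOp u + 1) - u_xy² - u_xt² = e^F`. -/
def ytOp (v : R3 → ℝ) : R3 → ℝ := pd vy (pd vy v) + pd vt (pd vt v) + pd vt v

def laplacianDt (v : R3 → ℝ) : R3 → ℝ := pd vx (pd vx v) + ytOp v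

def cyOp (u : R3 → ℝ) : R3 → ℝ := fun p =>
  (pd vx (pd vx u) p + 1) * (ytOp u p + 1) - pd vy (pd vx u) p ^ 2 - pd vt (pd vx u) p ^ 2

/-- The polarization of the quadratic part of `cyOp`:
`cyOp u = 1 + laplacianDt u + cyBil u u / 2`. -/
def cyBil (v w : R3 → ℝ) : R3 → ℝ := fun p =>
  pd vx (pd vx v) p * ytOp w p + ytOp v p * pd vx (pd vx w) p
    - 2 * (pd vy (pd vx v) p * pd vy (pd vx w) p) - 2 * (pd vt (pd vx v) p * pd vt (pd vx w) p)

/-- The linearization of `cyOp` at `u`. -/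
def cyLin (u w : R3 → ℝ) : R3 → ℝ := fun p => cyBil u w p + laplacianDt w p

section CalabiYauOperator

variable {u v w : R3 → ℝ} {p : R3}

lemma differentiable_pd_pd (hv : ContDiff ℝ 3 v) (a b : R3) :
    Differentiable ℝ (pd a (pd b v)) :=
  differentiable_pd (contDiff_pd (m := 2) hv (by norm_num) b) le_rfl a

lemma differentiable_ytOp (hv : ContDiff ℝ 3 v) : Differentiable ℝ (ytOp v) :=
  ((differentiable_pd_pd hv vy vy).add (differentiable_pd_pd hv vt vt)).add
    (differentiable_pd hv (by norm_num) vt)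

lemma pd_ytOp (hv : ContDiff ℝ 3 v) (e p : R3) :
    pd e (ytOp v) p = ytOp (pd e v) p := by
  have hyy := differentiable_pd_pd hv vy vy
  have htt := differentiable_pd_pd hv vt vt
  have ht := differentiable_pd hv (by norm_num) vt
  simp only [ytOp, pd_add (hyy.add htt) ht, pd_add hyy htt, pd_pd_pd_comm hv e vy vy,
    pd_pd_pd_comm hv e vt vt, pd_comm (hv.of_le (by norm_num)) e vt]

lemma pd_laplacianDt (hv : ContDiff ℝ 3 v) (e p : R3) :
    pd e (laplacianDt v) p = laplacianDt (pd e v) p := by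
  rw [laplacianDt, pd_add (differentiable_pd_pd hv vx vx) (differentiable_ytOp hv), Pi.add_apply,
    pd_ytOp hv, pd_pd_pd_comm hv]
  rfl

lemma contDiff_laplacianDt (hv : ContDiff ℝ 4 v) : ContDiff ℝ 2 (laplacianDt v) := by
  have h2 (e : R3) : ContDiff ℝ 2 (pd e (pd e v)) :=
    contDiff_pd (contDiff_pd (m := 3) hv (by norm_num) e) (by norm_num) e
  exact (h2 vx).add (((h2 vy).add (h2 vt)).add (contDiff_pd hv (by norm_num) vt))

lemma periodic3_laplacianDt (hv : Periodic3 v) : Periodic3 (laplacianDt v) :=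
  (periodic3_pd (periodic3_pd hv vx) vx).add (((periodic3_pd (periodic3_pd hv vy) vy).add
    (periodic3_pd (periodic3_pd hv vt) vt)).add (periodic3_pd hv vt))

lemma differentiable_cyBil (hv : ContDiff ℝ 3 v) (hw : ContDiff ℝ 3 w) :
    Differentiable ℝ (cyBil v w) := by
  have := differentiable_pd_pd hv vx vx
  have := differentiable_pd_pd hv vy vx
  have := differentiable_pd_pd hv vt vx
  have := differentiable_pd_pd hw vx vx
  have := differentiable_pd_pd hw vy vx
  have := differentiable_pd_pd hw vt vx
  have := differentiable_ytOp hv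
  have := differentiable_ytOp hw
  unfold cyBil
  fun_prop

lemma pd_cyBil (hv : ContDiff ℝ 3 v) (hw : ContDiff ℝ 3 w) (e p : R3) :
    pd e (cyBil v w) p = cyBil (pd e v) w p + cyBil v (pd e w) p := by
  have := differentiable_pd_pd hv vx vx
  have := differentiable_pd_pd hv vy vx
  have := differentiable_pd_pd hv vt vx
  have := differentiable_pd_pd hw vx vx
  have := differentiable_pd_pd hw vy vx
  have := differentiable_pd_pd hw vt vx
  have := differentiable_ytOp hv
  have := differentiable_ytOp hw
  unfold cyBil
  simp (disch := fun_prop) only [pd_fun_sub, pd_fun_add, pd_fun_mul, pd_const]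
  simp only [pd_ytOp hv, pd_ytOp hw, pd_pd_pd_comm hv e, pd_pd_pd_comm hw e]
  ring

lemma pd_cyLin (hu : ContDiff ℝ 3 u) (hw : ContDiff ℝ 3 w) (e p : R3) :
    pd e (cyLin u w) p = cyLin u (pd e w) p + cyBil (pd e u) w p := by
  have hxx := differentiable_pd_pd hw vx vx
  have hP := differentiable_ytOp hw
  have hL : pd e (laplacianDt w) = laplacianDt (pd e w) := funext (pd_laplacianDt hw e)
  have hL' : Differentiable ℝ (laplacianDt w) := hxx.add hP
  unfold cyLin
  rw [pd_fun_add (differentiable_cyBil hu hw p) (hL' p), pd_cyBil hu hw, hL]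
  ring

lemma pd_cyOp (hu : ContDiff ℝ 3 u) (e p : R3) :
    pd e (cyOp u) p = cyLin u (pd e u) p := by
  have := differentiable_pd_pd hu vx vx
  have := differentiable_pd_pd hu vy vx
  have := differentiable_pd_pd hu vt vx
  have := differentiable_ytOp hu
  unfold cyOp
  simp (disch := fun_prop) only [pd_fun_sub, pd_fun_mul, pd_fun_sq, pd_add_const]
  simp only [cyLin, cyBil, laplacianDt, Pi.add_apply, pd_ytOp hu, pd_pd_pd_comm hu e]
  ring

lemma pd_pd_cyOp (hu : ContDiff ℝ 4 u) (e p : R3) :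
    pd e (pd e (cyOp u)) p = cyLin u (pd e (pd e u)) p + cyBil (pd e u) (pd e u) p := by
  rw [show pd e (cyOp u) = cyLin u (pd e u) from funext (pd_cyOp (hu.of_le (by norm_num)) e),
    pd_cyLin (hu.of_le (by norm_num)) (contDiff_pd hu (by norm_num) e)]

lemma cyLin_add (hv : ContDiff ℝ 2 v) (hw : ContDiff ℝ 2 w) (p : R3) :
    cyLin u (v + w) p = cyLin u v p + cyLin u w p := by
  have h1 : ∀ b, pd b (v + w) = pd b v + pd b w :=
    pd_add (hv.differentiable two_ne_zero) (hw.differentiable two_ne_zero)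
  have h2 (a b : R3) : pd a (pd b v + pd b w) = pd a (pd b v) + pd a (pd b w) :=
    pd_add (differentiable_pd hv le_rfl b) (differentiable_pd hw le_rfl b) a
  simp only [cyLin, cyBil, laplacianDt, ytOp, h1, h2, Pi.add_apply]
  ring

lemma cyLin_sub (hv : ContDiff ℝ 2 v) (hw : ContDiff ℝ 2 w) (p : R3) :
    cyLin u (v - w) p = cyLin u v p - cyLin u w p := by
  have h1 : ∀ b, pd b (v - w) = pd b v - pd b w :=
    pd_sub (hv.differentiable two_ne_zero) (hw.differentiable two_ne_zero)
  have h2 (a b : R3) : pd a (pd b v - pd b w) = pd a (pd b v) - pd a (pd b w) :=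
    pd_sub (differentiable_pd hv le_rfl b) (differentiable_pd hw le_rfl b) a
  simp only [cyLin, cyBil, laplacianDt, ytOp, h1, h2, Pi.add_apply, Pi.sub_apply]
  ring

lemma cyLin_const_smul (hv : ContDiff ℝ 2 v) (c : ℝ) (p : R3) :
    cyLin u (c • v) p = c * cyLin u v p := by
  have h1 : ∀ b, pd b (c • v) = c • pd b v := pd_const_smul (hv.differentiable two_ne_zero) c
  have h2 (a b : R3) : pd a (c • pd b v) = c • pd a (pd b v) :=
    pd_const_smul (differentiable_pd hv le_rfl b) c a
  simp only [cyLin, cyBil, laplacianDt, ytOp, h1, h2, Pi.add_apply, Pi.smul_apply, smul_eq_mul]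
  ring

lemma cyLin_self (u : R3 → ℝ) (p : R3) : cyLin u u p = 2 * cyOp u p - laplacianDt u p - 2 := by
  simp only [cyLin, cyBil, cyOp, laplacianDt, Pi.add_apply]
  ring

lemma cyBil_self_le (v : R3 → ℝ) (p : R3) : cyBil v v p ≤ laplacianDt v p ^ 2 / 2 := by
  simp only [cyBil, laplacianDt, Pi.add_apply]
  nlinarith [sq_nonneg (pd vx (pd vx v) p - ytOp v p), sq_nonneg (pd vy (pd vx v) p),
    sq_nonneg (pd vt (pd vx v) p)]

/-- With `w₁ = b vx - c vy - d vt` and `w₂ = d vy - c vt`, `b` times the left-hand side is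
`D w₁ w₁ + D w₂ w₂ + (a b - c² - d²) (D vy vy + D vt vt)`. -/
lemma elliptic_combination_nonpos (D : R3 →L[ℝ] R3 →L[ℝ] ℝ) (hD : ∀ v w, D v w = D w v)
    (hneg : ∀ w, D w w ≤ 0) {a b c d : ℝ} (hb : 0 < b) (hdet : 0 ≤ a * b - c ^ 2 - d ^ 2) :
    b * D vx vx + a * (D vy vy + D vt vt) - 2 * c * D vy vx - 2 * d * D vt vx ≤ 0 := by
  have h1 := hneg (b • vx - c • vy - d • vt)
  have h2 := hneg (d • vy - c • vt)
  simp only [map_sub, map_smul, sub_apply, smul_apply, smul_eq_mul] at h1 h2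
  simp only [hD vx vy, hD vx vt, hD vy vt] at h1 h2
  have h3 := mul_nonpos_of_nonneg_of_nonpos hdet (add_nonpos (hneg vy) (hneg vt))
  refine nonpos_of_mul_nonpos_right ?_ hb
  linear_combination h1 + h2 + h3

lemma IsLocalMax.laplacianDt_pd_eq {a : ℝ} (hmax : IsLocalMax (laplacianDt u - a • u) p)
    (hu : ContDiff ℝ 4 u) (e : R3) : laplacianDt (pd e u) p = a * pd e u p := by
  have hu2 : ContDiff ℝ 2 u := hu.of_le (by norm_num)
  have hau : ContDiff ℝ 2 (a • u) := hu2.const_smul a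
  have := hmax.pd_eq_zero e
  rw [pd_sub ((contDiff_laplacianDt hu).differentiable two_ne_zero)
      (hau.differentiable two_ne_zero),
    pd_const_smul (hu2.differentiable two_ne_zero), Pi.sub_apply, Pi.smul_apply,
    pd_laplacianDt (hu.of_le (by norm_num)), smul_eq_mul] at this
  linarith

lemma IsLocalMax.cyLin_nonpos {H : R3 → ℝ} (h : IsLocalMax H p) (hH : ContDiff ℝ 2 H)
    (hb : 0 < ytOp u p + 1) (hdet : 0 ≤ cyOp u p) : cyLin u H p ≤ 0 := by
  have key := elliptic_combination_nonpos (fderiv ℝ (fderiv ℝ H) p)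
    (hH.contDiffAt.isSymmSndFDerivAt (by simp))
    (fun w => pd_pd_eq_fderiv_fderiv hH w w p ▸ h.pd_pd_nonpos hH w) hb hdet
  simp only [← pd_pd_eq_fderiv_fderiv hH, ytOp, Pi.add_apply] at key
  simp only [cyLin, cyBil, laplacianDt, ytOp, Pi.add_apply, h.pd_eq_zero vt]
  linear_combination key

end CalabiYauOperator

section Equation

variable {F u : R3 → ℝ} {K : ℝ}

lemma CYeq.cyOp_eq (hcy : CYeq F u) (p : R3) : cyOp u p = Real.exp (F p) := hcy p

lemma CYeq.pos (hcy : CYeq F u) (hu : ContDiff ℝ 2 u) (hper : Periodic3 u) (p : R3) :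
    0 < pd vx (pd vx u) p + 1 ∧ 0 < ytOp u p + 1 := by
  have hAB (q : R3) : (pd vx (pd vx u) q + 1) * (ytOp u q + 1)
      = Real.exp (F q) + pd vy (pd vx u) q ^ 2 + pd vt (pd vx u) q ^ 2 := by
    have h := hcy.cyOp_eq q
    unfold cyOp at h
    linear_combination h
  have hAB_pos (q : R3) : 0 < (pd vx (pd vx u) q + 1) * (ytOp u q + 1) := by
    rw [hAB]
    positivity
  obtain ⟨pmin, hpmin⟩ := hper.exists_forall_ge hu.continuous
  have hA : 0 < pd vx (pd vx u) p + 1 := by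
    by_contra! hle
    have hmin : 0 ≤ pd vx (pd vx u) pmin :=
      IsLocalMin.pd_pd_nonneg (Filter.Eventually.of_forall hpmin) hu vx
    have hcont : Continuous fun q => pd vx (pd vx u) q + 1 :=
      ((contDiff_pd (m := 0) (contDiff_pd (m := 1) hu (by norm_num) vx) (by norm_num)
        vx).continuous).add continuous_const
    obtain ⟨r, hr⟩ := intermediate_value_univ p pmin hcont ⟨hle, by linarith⟩
    simpa [hr] using hAB_pos r
  exact ⟨hA, pos_of_mul_pos_right (hAB_pos p) hA.le⟩

lemma CYeq.cyLin_laplacianDt (hcy : CYeq F u) (hu : ContDiff ℝ 4 u) (p : R3) :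
    cyLin u (laplacianDt u) p =
      (pd vx (pd vx (fun q => Real.exp (F q))) p - cyBil (pd vx u) (pd vx u) p)
      + (pd vy (pd vy (fun q => Real.exp (F q))) p - cyBil (pd vy u) (pd vy u) p)
      + (pd vt (pd vt (fun q => Real.exp (F q))) p - cyBil (pd vt u) (pd vt u) p)
      + pd vt (fun q => Real.exp (F q)) p := by
  have hE : cyOp u = fun q => Real.exp (F q) := funext hcy
  have h2 (e : R3) : ContDiff ℝ 2 (pd e (pd e u)) :=
    contDiff_pd (contDiff_pd (m := 3) hu (by norm_num) e) (by norm_num) e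
  have h1 : ContDiff ℝ 2 (pd vt u) := contDiff_pd hu (by norm_num) vt
  have hyy_tt : ContDiff ℝ 2 (pd vy (pd vy u) + pd vt (pd vt u)) := (h2 vy).add (h2 vt)
  have hyt : ContDiff ℝ 2 (pd vy (pd vy u) + pd vt (pd vt u) + pd vt u) := hyy_tt.add h1
  rw [laplacianDt, ytOp, cyLin_add (h2 vx) hyt, cyLin_add hyy_tt h1, cyLin_add (h2 vy) (h2 vt),
    ← hE, pd_cyOp (hu.of_le (by norm_num)), pd_pd_cyOp hu, pd_pd_cyOp hu, pd_pd_cyOp hu]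
  ring

lemma C2Bound.neg_le_pd_exp (hFK : C2Bound F K) (hF : Differentiable ℝ F) {e : R3}
    (he : e ∈ ({vx, vy, vt} : Set R3)) (p : R3) :
    -(K * Real.exp K) ≤ pd e (fun q => Real.exp (F q)) p := by
  obtain ⟨hF0, hF1, -⟩ := hFK p
  have hK : 0 ≤ K := (abs_nonneg _).trans hF0
  have hexp : Real.exp (F p) ≤ Real.exp K := Real.exp_le_exp.mpr (abs_le.mp hF0).2
  rw [pd_exp (hF p)]
  nlinarith [mul_le_mul_of_nonneg_left (abs_le.mp (hF1 e he)).1 (Real.exp_pos (F p)).le,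
    mul_le_mul_of_nonneg_left hexp hK]

lemma C2Bound.neg_le_pd_pd_exp (hFK : C2Bound F K) (hF : ContDiff ℝ 2 F) {e : R3}
    (he : e ∈ ({vx, vy, vt} : Set R3)) (p : R3) :
    -(K * Real.exp K) ≤ pd e (pd e (fun q => Real.exp (F q))) p := by
  obtain ⟨hF0, -, hF2⟩ := hFK p
  have hK : 0 ≤ K := (abs_nonneg _).trans hF0
  have hexp : Real.exp (F p) ≤ Real.exp K := Real.exp_le_exp.mpr (abs_le.mp hF0).2
  have hsum : -K ≤ pd e F p ^ 2 + pd e (pd e F) p := by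
    nlinarith [(abs_le.mp (hF2 e he e he)).1, sq_nonneg (pd e F p)]
  rw [pd_pd_exp hF]
  nlinarith [mul_le_mul_of_nonneg_left hsum (Real.exp_pos (F p)).le,
    mul_le_mul_of_nonneg_left hexp hK]

lemma CYeq.laplacianDt_le_of_isLocalMax (hcy : CYeq F u) (hF : ContDiff ℝ 2 F)
    (hFK : C2Bound F K) (hu : ContDiff ℝ 4 u) {a M : ℝ} {p : R3} (ha : 0 < a)
    (hM : ∀ e ∈ ({vx, vy, vt} : Set R3), |pd e u p| ≤ M) (hb : 0 < ytOp u p + 1)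
    (hmax : IsLocalMax (laplacianDt u - a • u) p) :
    laplacianDt u p + 2 ≤ 2 * Real.exp K + 4 * K * Real.exp K / a + 3 / 2 * a * M ^ 2 := by
  have hu2 : ContDiff ℝ 2 u := hu.of_le (by norm_num)
  have hL := contDiff_laplacianDt hu
  have hau : ContDiff ℝ 2 (a • u) := hu2.const_smul a
  have hneg := hmax.cyLin_nonpos (hL.sub hau) hb (hcy.cyOp_eq p ▸ (Real.exp_pos _).le)
  rw [cyLin_sub hL hau, cyLin_const_smul hu2, hcy.cyLin_laplacianDt hu, cyLin_self,
    hcy.cyOp_eq] at hneg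
  have hbil {e : R3} (he : e ∈ ({vx, vy, vt} : Set R3)) :
      cyBil (pd e u) (pd e u) p ≤ a ^ 2 * M ^ 2 / 2 := by
    refine (cyBil_self_le _ p).trans ?_
    have hsq := sq_le_sq' (abs_le.mp (hM e he)).1 (abs_le.mp (hM e he)).2
    rw [hmax.laplacianDt_pd_eq hu, mul_pow]
    linarith [mul_le_mul_of_nonneg_left hsq (sq_nonneg a)]
  have hexp : a * Real.exp (F p) ≤ a * Real.exp K :=
    mul_le_mul_of_nonneg_left (Real.exp_le_exp.mpr (abs_le.mp (hFK p).1).2) ha.le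
  have key : a * (laplacianDt u p + 2) ≤ a * (2 * Real.exp K + 3 / 2 * a * M ^ 2)
      + 4 * K * Real.exp K := by
    linear_combination hneg + 2 * hexp + hbil (e := vx) (by simp) + hbil (e := vy) (by simp)
      + hbil (e := vt) (by simp) + hFK.neg_le_pd_pd_exp hF (e := vx) (by simp) p
      + hFK.neg_le_pd_pd_exp hF (e := vy) (by simp) p
      + hFK.neg_le_pd_pd_exp hF (e := vt) (by simp) p
      + hFK.neg_le_pd_exp (hF.differentiable two_ne_zero) (e := vt) (by simp) p
  have : laplacianDt u p + 2 - (2 * Real.exp K + 3 / 2 * a * M ^ 2)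
      ≤ 4 * K * Real.exp K / a := by
    rw [le_div_iff₀ ha]
    linarith
  linarith

lemma CYeq.laplacianDt_le (hcy : CYeq F u) (hF : ContDiff ℝ 2 F) (hFK : C2Bound F K)
    (hu : ContDiff ℝ 4 u) (hper : Periodic3 u) {M : ℝ}
    (hM : ∀ e ∈ ({vx, vy, vt} : Set R3), ∀ p, |pd e u p| ≤ M) (p : R3) :
    laplacianDt u p ≤ 2 * Real.exp K + 4 * K * Real.exp K * (1 + M) + 3 / 2 * M + 1 := by
  have hu2 : ContDiff ℝ 2 u := hu.of_le (by norm_num)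
  have hM0 : 0 ≤ M := (abs_nonneg _).trans (hM vx (by simp) p)
  set a := (1 + M)⁻¹ with ha_def
  have ha : 0 < a := by positivity
  have haM : a * M ≤ 1 := by
    rw [ha_def, inv_mul_le_iff₀ (by positivity)]
    linarith
  obtain ⟨p₀, hp₀⟩ := ((periodic3_laplacianDt hper).sub (hper.const_smul a)).exists_forall_le
    ((contDiff_laplacianDt hu).continuous.sub (hu2.continuous.const_smul a))
  have hmax := hcy.laplacianDt_le_of_isLocalMax hF hFK hu ha (fun e he => hM e he p₀)
    (hcy.pos hu2 hper p₀).2 (Filter.Eventually.of_forall hp₀)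
  rw [ha_def, div_inv_eq_mul, ← ha_def] at hmax
  have hosc := mul_le_mul_of_nonneg_left
    (abs_le.mp (hper.abs_sub_le (hu.differentiable (by norm_num)) hM p p₀)).2 ha.le
  have hH : laplacianDt u p - a * u p ≤ laplacianDt u p₀ - a * u p₀ := hp₀ p
  linarith [mul_le_mul_of_nonneg_right haM hM0]

end Equation

/-- Laplacian estimate: for every `K > 0` there is `C₁ > 0`,
depending only on `K`, such that `|Δu|_{C⁰} ≤ C₁ (1 + |u|_{C¹})` for every `C⁴`
solution `u` of the reduced Calabi–Yau equation with `‖F‖_{C²} ≤ K` and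
`∫ e^F = 1` (here `M` is any uniform bound on the first derivatives of `u`). -/
theorem stmt10 (K : ℝ) (hK : 0 < K) :
    ∃ C₁ : ℝ, 0 < C₁ ∧
      ∀ F u : R3 → ℝ,
        ContDiff ℝ 2 F → Periodic3 F → C2Bound F K →
        (∫ p in cube, Real.exp (F p)) = 1 →
        ContDiff ℝ 4 u → Periodic3 u → ZeroMean u → CYeq F u →
        ∀ M : ℝ, (∀ e ∈ ({vx, vy, vt} : Set R3), ∀ p : R3, |pd e u p| ≤ M) →
        ∀ p : R3, |pd vx (pd vx u) p + pd vy (pd vy u) p + pd vt (pd vt u) p| ≤ C₁ * (1 + M) := by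
  refine ⟨(4 * K + 2) * Real.exp K + 3, by positivity, ?_⟩
  intro F u hF _ hFK _ hu hper _ hcy M hM p
  have hM0 : 0 ≤ M := (abs_nonneg _).trans (hM vx (by simp) p)
  have hut := abs_le.mp (hM vt (by simp) p)
  have hpos := hcy.pos (hu.of_le (by norm_num)) hper p
  have hupper := hcy.laplacianDt_le hF hFK hu hper hM p
  have hΔ : pd vx (pd vx u) p + pd vy (pd vy u) p + pd vt (pd vt u) p
      = laplacianDt u p - pd vt u p := by
    simp only [laplacianDt, ytOp, Pi.add_apply]
    ring
  have hL : laplacianDt u p = (pd vx (pd vx u) p + 1) + (ytOp u p + 1) - 2 := by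
    simp only [laplacianDt, Pi.add_apply]
    ring
  have hC : 3 * (1 + M) ≤ ((4 * K + 2) * Real.exp K + 3) * (1 + M) := by
    gcongr
    linarith [mul_pos (by linarith : 0 < 4 * K + 2) (Real.exp_pos K)]
  rw [abs_le, hΔ]
  constructor <;> linarith [mul_nonneg (Real.exp_pos K).le hM0]

end
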